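/- arXiv:1305.5688 — 5 statements merged into one kernel-verified Lean document; each statement's English description precedes it below -/
import Mathlib

section
/- Let (Ω,μ) be a finite measure space, X a Banach space, and 1 ≤ p < ∞. If a subset V of L^p(μ;X) is uniformly L^p-integrable, uniformly tight, and scalarly relatively compact, then V is relatively compact in L^p(μ;X). -/
/-!
By Vitali's theorem, a uniformly integrable sequence that is Cauchy in measure is Cauchy in `L^p`,
so it suffices to extract from every sequence in `V` a subsequence that is Cauchy in measure.
Tightness confines the functions, up to small measure, to compact sets `K j`; their union is
separable, so countably many functionals `L n` separate its points, and on each compact `K j`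
finitely many of them control the distance up to any `δ`. Scalar compactness and a diagonal
argument give a subsequence along which every `L n ∘ f` converges in `L^p`, hence in measure,
and this forces the subsequence itself to be Cauchy in measure. Every sequence in `V` thus has an
`L^p`-Cauchy subsequence, i.e. `V` is totally bounded, and `L^p` is complete.
-/

open MeasureTheory ENNReal Filter Set Topology

theorem totallyBounded_of_forall_exists_cauchySeq_subseq {α : Type*} [UniformSpace α]
    {s : Set α}
    (h : ∀ u : ℕ → α, (∀ n, u n ∈ s) → ∃ φ : ℕ → ℕ, StrictMono φ ∧ CauchySeq (u ∘ φ)) :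
    TotallyBounded s := by
  intro V hV
  contrapose! h
  obtain ⟨u, hus, hu⟩ : ∃ u : ℕ → α,
      (∀ n, u n ∈ s) ∧ ∀ n m, m < n → u m ∉ UniformSpace.ball (u n) V := by
    simp only [not_subset, mem_iUnion₂, not_exists, exists_prop] at h
    simpa only [forall_and, forall_mem_image, not_and] using! seq_of_forall_finite_exists h
  refine ⟨u, hus, fun φ hφ hcauchy => ?_⟩
  obtain ⟨N, hN⟩ := hcauchy.mem_entourage hV
  exact hu (φ (N + 1)) (φ N) (hφ N.lt_add_one) (hN (N + 1) N N.le_succ le_rfl)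

theorem exists_subseq_forall_tendsto {ι : Type*} [Countable ι] {E : ι → Type*}
    [∀ i, TopologicalSpace (E i)] [∀ i, FirstCountableTopology (E i)] {s : ∀ i, Set (E i)}
    (hs : ∀ i, IsCompact (s i)) {x : ℕ → ∀ i, E i} (hx : ∀ n i, x n i ∈ s i) :
    ∃ a : ∀ i, E i, ∃ φ : ℕ → ℕ, StrictMono φ ∧
      ∀ i, Tendsto (fun n => x (φ n) i) atTop (𝓝 (a i)) := by
  obtain ⟨a, -, φ, hφ, hlim⟩ := (isCompact_univ_pi hs).tendsto_subseq fun n i _ => hx n i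
  exact ⟨a, φ, hφ, tendsto_pi_nhds.1 hlim⟩

theorem exists_seq_dual_injOn_of_isSeparable {X : Type*} [NormedAddCommGroup X]
    [NormedSpace ℝ X] {s : Set X} (hs : TopologicalSpace.IsSeparable s) :
    ∃ L : ℕ → X →L[ℝ] ℝ, InjOn (fun x n => L n x) s := by
  obtain ⟨t, -, htc, hst⟩ := ((hs.prod hs).image (f := fun z : X × X => z.1 - z.2)
    (by fun_prop)).exists_countable_dense_subset
  obtain ⟨d, hd⟩ := (htc.insert 0).exists_eq_range (insert_nonempty 0 t)
  choose L hL1 hLd using fun n => exists_dual_vector'' ℝ (d n)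
  refine ⟨L, fun x hx y hy hxy => ?_⟩
  by_contra hne
  have hpos : 0 < ‖x - y‖ := norm_sub_pos_iff.2 hne
  obtain ⟨e, het, hxe⟩ :=
    Metric.mem_closure_iff.1 (hst ⟨(x, y), ⟨hx, hy⟩, rfl⟩) _ (half_pos hpos)
  obtain ⟨n, rfl⟩ : e ∈ range d := hd ▸ mem_insert_of_mem 0 het
  rw [dist_eq_norm] at hxe
  -- `L n` norms `d n`, which is within `‖x - y‖ / 2` of `x - y`, so it cannot vanish on `x - y`
  have hLxy : L n (x - y) = 0 := by rw [map_sub, sub_eq_zero]; exact congr_fun hxy n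
  have hbound : ‖L n (x - y - d n)‖ ≤ ‖x - y - d n‖ := by
    simpa using (L n).le_of_opNorm_le (hL1 n) (x - y - d n)
  rw [map_sub, hLxy, hLd, zero_sub, norm_neg, RCLike.norm_ofReal, abs_norm] at hbound
  linarith [norm_sub_norm_le (x - y) (d n)]

theorem IsCompact.exists_finset_forall_lt_imp_dist_lt {X ι : Type*} [MetricSpace X]
    {L : ι → X → ℝ} (hL : ∀ i, Continuous (L i)) {K : Set X} (hK : IsCompact K)
    (hinj : InjOn (fun x i => L i x) K) {δ : ℝ} (hδ : 0 < δ) :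
    ∃ F : Finset ι, ∃ θ > 0,
      ∀ x ∈ K, ∀ y ∈ K, (∀ i ∈ F, |L i x - L i y| < θ) → dist x y < δ := by
  set C : Set (X × X) := K ×ˢ K ∩ {z | δ ≤ dist z.1 z.2}
  have hC : IsCompact C := (hK.prod hK).inter_right (isClosed_le continuous_const (by fun_prop))
  have hcover : C ⊆ ⋃ i, {z : X × X | L i z.1 ≠ L i z.2} := by
    rintro ⟨x, y⟩ ⟨⟨hx, hy⟩, hxy⟩
    have hne : x ≠ y := by rintro rfl; simp only [mem_ofPred_eq, dist_self] at hxy; linarith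
    simpa [funext_iff] using mt (hinj hx hy) hne
  obtain ⟨F, hF⟩ := hC.elim_finite_subcover _
    (fun i => isOpen_ne_fun ((hL i).comp continuous_fst) ((hL i).comp continuous_snd)) hcover
  obtain ⟨a, ha, hCa⟩ := hC.exists_forall_le' (f := fun z => ∑ i ∈ F, |L i z.1 - L i z.2|)
    (by fun_prop) (a := 0) fun z hz => by
      obtain ⟨i, hiF, hi⟩ := mem_iUnion₂.1 (hF hz)
      exact Finset.sum_pos' (fun _ _ => abs_nonneg _) ⟨i, hiF, abs_pos.2 (sub_ne_zero.2 hi)⟩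
  refine ⟨F, a / (F.card + 1), by positivity, fun x hx y hy hθ => ?_⟩
  by_contra! hxy
  have hsum : ∑ i ∈ F, |L i x - L i y| ≤ F.card * (a / (F.card + 1)) := by
    simpa using Finset.sum_le_sum fun i hi => (hθ i hi).le
  have : (F.card : ℝ) * (a / (F.card + 1)) < a := by
    rw [mul_div_assoc', div_lt_iff₀ (by positivity)]; nlinarith
  linarith [hCa (x, y) ⟨⟨hx, hy⟩, hxy⟩]

theorem ENNReal.tendsto_nhds_zero_of_forall_le_ofReal {ι : Type*} {l : Filter ι} {u : ι → ℝ≥0∞}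
    (h : ∀ ε : ℝ, 0 < ε → ∀ᶠ i in l, u i ≤ ENNReal.ofReal ε) : Tendsto u l (𝓝 0) := by
  refine ENNReal.tendsto_nhds_zero.2 fun ε hε => ?_
  obtain ⟨r, -, hr, hrε⟩ := ENNReal.lt_iff_exists_real_btwn.1 hε
  exact (h r (ENNReal.ofReal_pos.1 hr)).mono fun i hi => hi.trans hrε.le

namespace MeasureTheory

variable {α E ι : Type*} {m : MeasurableSpace α} {μ : Measure α} [NormedAddCommGroup E]
  {p : ℝ≥0∞}

theorem TendstoInMeasure.sub_prod {l : Filter ι} {f : ι → α → E} {g : α → E}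
    (hfg : TendstoInMeasure μ f l g) :
    TendstoInMeasure μ (fun ij : ι × ι => f ij.1 - f ij.2) (l ×ˢ l) 0 := by
  rw [tendstoInMeasure_iff_norm] at hfg
  refine tendstoInMeasure_iff_norm.2 fun ε hε => ?_
  have hsum :=
    ((hfg _ (half_pos hε)).comp tendsto_fst).add ((hfg _ (half_pos hε)).comp tendsto_snd)
  rw [add_zero] at hsum
  refine tendsto_of_tendsto_of_tendsto_of_le_of_le tendsto_const_nhds hsum (fun _ => bot_le)
    fun ij => (measure_mono fun x hx => ?_).trans (measure_union_le _ _)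
  by_contra! h
  simp only [mem_union, mem_ofPred_eq, not_or, not_le] at h hx
  have := norm_sub_le (f ij.1 x - g x) (f ij.2 x - g x)
  simp only [Pi.sub_apply, Pi.zero_apply, sub_zero, sub_sub_sub_cancel_right] at hx this
  linarith

theorem tendsto_eLpNorm_zero_of_unifIntegrable_of_tendstoInMeasure [IsFiniteMeasure μ]
    (hp : 1 ≤ p) {l : Filter ι} {g : ι → α → E} (hg : ∀ i, AEStronglyMeasurable (g i) μ)
    (hui : UnifIntegrable g p μ) (hlim : TendstoInMeasure μ g l 0) :
    Tendsto (fun i => eLpNorm (g i) p μ) l (𝓝 0) := by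
  refine ENNReal.tendsto_nhds_zero_of_forall_le_ofReal fun ε hε => ?_
  obtain ⟨δ, hδ, hsmall⟩ := hui (half_pos hε)
  set M := μ univ ^ p.toReal⁻¹
  obtain ⟨η, hηM, hη⟩ : ∃ η : ℝ, M * ENNReal.ofReal η < ENNReal.ofReal (ε / 2) ∧ 0 < η := by
    have hofReal : Tendsto ENNReal.ofReal (𝓝 0) (𝓝 0) := by
      simpa using ENNReal.tendsto_ofReal (tendsto_id (x := 𝓝 (0 : ℝ)))
    have : Tendsto (fun η => M * ENNReal.ofReal η) (𝓝[>] 0) (𝓝 0) := by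
      simpa using (ENNReal.Tendsto.const_mul hofReal (Or.inr (by finiteness))).mono_left
        nhdsWithin_le_nhds
    exact ((this.eventually (gt_mem_nhds (by simpa using half_pos hε))).and
      self_mem_nhdsWithin).exists
  filter_upwards [(tendstoInMeasure_iff_norm.1 hlim η hη).eventually_le_const
    (ENNReal.ofReal_pos.2 hδ)] with i hi
  -- `g i` is only a.e. strongly measurable: enlarge the set where it is large to a measurable one
  set S := toMeasurable μ {x | η ≤ ‖g i x - 0‖}
  have hS := measurableSet_toMeasurable μ {x | η ≤ ‖g i x - 0‖}
  have hbound : ∀ x, ‖Sᶜ.indicator (g i) x‖ ≤ η := fun x => by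
    by_cases hx : x ∈ S
    · simp [hx, hη.le]
    · have : x ∉ {x | η ≤ ‖g i x - 0‖} := fun h => hx (subset_toMeasurable μ _ h)
      simp only [mem_ofPred_eq, sub_zero, not_le] at this
      simpa [hx] using this.le
  calc eLpNorm (g i) p μ = eLpNorm (S.indicator (g i) + Sᶜ.indicator (g i)) p μ := by
        rw [indicator_self_add_compl]
    _ ≤ eLpNorm (S.indicator (g i)) p μ + eLpNorm (Sᶜ.indicator (g i)) p μ :=
        eLpNorm_add_le ((hg i).indicator hS) ((hg i).indicator hS.compl) hp
    _ ≤ ENNReal.ofReal (ε / 2) + M * ENNReal.ofReal η :=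
        add_le_add (hsmall i S hS (by rwa [measure_toMeasurable]))
          (eLpNorm_le_of_ae_bound (ae_of_all _ hbound))
    _ ≤ ENNReal.ofReal ε := by
        grw [hηM.le, ← ENNReal.ofReal_add (half_pos hε).le (half_pos hε).le, add_halves]

theorem UnifIntegrable.comp {κ : Type*} {f : ι → α → E} (hf : UnifIntegrable f p μ)
    (g : κ → ι) : UnifIntegrable (f ∘ g) p μ :=
  fun _ hε => (hf hε).imp fun _ ⟨hδ, h⟩ => ⟨hδ, fun k => h (g k)⟩

theorem Lp.cauchySeq_of_unifIntegrable_of_tendstoInMeasure [IsFiniteMeasure μ]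
    [hp : Fact (1 ≤ p)] {f : ℕ → Lp E p μ} (hui : UnifIntegrable (fun n => (f n : α → E)) p μ)
    (hf : TendstoInMeasure μ (fun nm : ℕ × ℕ => (f nm.1 : α → E) - (f nm.2 : α → E))
      (atTop ×ˢ atTop) 0) :
    CauchySeq f := by
  have hmeas n := Lp.aestronglyMeasurable (f n)
  have hdiff : UnifIntegrable (fun nm : ℕ × ℕ => (f nm.1 : α → E) - (f nm.2 : α → E)) p μ :=
    (hui.comp Prod.fst).sub (hui.comp Prod.snd) hp.out (fun nm => hmeas nm.1)
      (fun nm => hmeas nm.2)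
  have := tendsto_eLpNorm_zero_of_unifIntegrable_of_tendstoInMeasure hp.out
    (g := fun nm : ℕ × ℕ => (f nm.1 : α → E) - (f nm.2 : α → E))
    (fun nm => (hmeas nm.1).sub (hmeas nm.2)) hdiff hf
  rw [cauchySeq_iff_tendsto_dist_atTop_0, ← prod_atTop_atTop_eq]
  simpa only [Lp.dist_def, Function.comp_def, ENNReal.toReal_zero] using
    (ENNReal.tendsto_toReal ENNReal.zero_ne_top).comp this

theorem unifIntegrable_of_tendsto_iSup_eLpNorm_indicator [hp : Fact (1 ≤ p)] (hp' : p ≠ ∞)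
    {V : Set (Lp E p μ)}
    (hV : Tendsto (fun r : ℝ => ⨆ f ∈ V, eLpNorm ({x | r < ‖(f : α → E) x‖}.indicator f) p μ)
      atTop (𝓝 0)) :
    UnifIntegrable (fun f : V => (f : α → E)) p μ := by
  refine unifIntegrable_of hp.out hp' (fun f => Lp.aestronglyMeasurable _) fun ε hε => ?_
  obtain ⟨r, hr, hr0⟩ :=
    ((hV.eventually_le_const (ENNReal.ofReal_pos.2 hε)).and (eventually_ge_atTop 0)).exists
  refine ⟨(r + 1).toNNReal, fun f => (eLpNorm_mono fun x => ?_).trans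
    ((le_iSup₂_of_le (f : Lp E p μ) f.2 le_rfl).trans hr)⟩
  refine norm_indicator_le_of_subset (fun x hx => ?_) _ x
  simp only [mem_ofPred_eq] at hx ⊢
  have : r + 1 ≤ ‖(f : α → E) x‖ := by
    simpa [← NNReal.coe_le_coe, Real.coe_toNNReal _ (by linarith : 0 ≤ r + 1)] using hx
  linarith

theorem tendstoInMeasure_sub_of_tight_of_separating {X ι κ : Type*} [NormedAddCommGroup X]
    {l : Filter (ι × ι)} {f : ι → α → X} {L : κ → X → ℝ} (hL : ∀ k, Continuous (L k))
    (htight : ∀ ε : ℝ, 0 < ε → ∃ K, IsCompact K ∧ InjOn (fun x k => L k x) K ∧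
      ∀ i, μ {x | f i x ∉ K} ≤ ENNReal.ofReal ε)
    (hlim : ∀ k, TendstoInMeasure μ (fun ij : ι × ι => fun x => L k (f ij.1 x) - L k (f ij.2 x))
      l 0) :
    TendstoInMeasure μ (fun ij : ι × ι => f ij.1 - f ij.2) l 0 := by
  refine tendstoInMeasure_iff_norm.2 fun δ hδ => ?_
  refine ENNReal.tendsto_nhds_zero_of_forall_le_ofReal fun ε hε => ?_
  obtain ⟨K, hK, hinj, hfK⟩ := htight (ε / 3) (by positivity)
  obtain ⟨F, θ, hθ, hsep⟩ := hK.exists_finset_forall_lt_imp_dist_lt hL hinj hδ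
  have hF : Tendsto (fun ij : ι × ι => ∑ k ∈ F, μ {x | θ ≤ |L k (f ij.1 x) - L k (f ij.2 x)|})
      l (𝓝 0) := by
    simpa using tendsto_finsetSum F fun k _ => tendstoInMeasure_iff_norm.1 (hlim k) θ hθ
  filter_upwards [hF.eventually_le_const (ENNReal.ofReal_pos.2 (by positivity : 0 < ε / 3))]
    with ij hij
  have hsub : {x | δ ≤ ‖(f ij.1 - f ij.2) x - (0 : α → X) x‖} ⊆ {x | f ij.1 x ∉ K} ∪
      {x | f ij.2 x ∉ K} ∪ ⋃ k ∈ F, {x | θ ≤ |L k (f ij.1 x) - L k (f ij.2 x)|} := by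
    intro x hx
    by_contra! h
    simp only [mem_union, mem_iUnion, mem_ofPred_eq, not_or, not_not, not_exists, not_le] at h hx
    have := hsep _ h.1.1 _ h.1.2 h.2
    rw [dist_eq_norm] at this
    simp only [Pi.sub_apply, Pi.zero_apply, sub_zero] at hx
    linarith
  calc _ ≤ μ ({x | f ij.1 x ∉ K} ∪ {x | f ij.2 x ∉ K} ∪
          ⋃ k ∈ F, {x | θ ≤ |L k (f ij.1 x) - L k (f ij.2 x)|}) := measure_mono hsub
    _ ≤ μ {x | f ij.1 x ∉ K} + μ {x | f ij.2 x ∉ K} +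
          ∑ k ∈ F, μ {x | θ ≤ |L k (f ij.1 x) - L k (f ij.2 x)|} :=
        (measure_union_le _ _).trans
          (add_le_add (measure_union_le _ _) (measure_biUnion_finset_le _ _))
    _ ≤ ENNReal.ofReal (ε / 3) + ENNReal.ofReal (ε / 3) + ENNReal.ofReal (ε / 3) := by
        gcongr
        exacts [hfK ij.1, hfK ij.2]
    _ = ENNReal.ofReal ε := by
        rw [← ENNReal.ofReal_add (by positivity) (by positivity),
          ← ENNReal.ofReal_add (by positivity) (by positivity)]
        ring_nf

end MeasureTheory

/-- If a subset `V` of `L^p(μ;X)` (`(Ω,μ)` a finite measure space, `X` a Banach space,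
`1 ≤ p < ∞`) is uniformly `L^p`-integrable, uniformly tight, and scalarly relatively
compact, then `V` is relatively compact in `L^p(μ;X)`. -/
theorem relatively_compact_of_integrable_tight_scalarlyCompact
    {Ω : Type*} [MeasurableSpace Ω] {X : Type*} [NormedAddCommGroup X]
    [NormedSpace ℝ X] [CompleteSpace X]
    (μ : Measure Ω) [IsFiniteMeasure μ] (p : ℝ≥0∞) [hp : Fact (1 ≤ p)] (hp' : p ≠ ∞)
    (V : Set (Lp X p μ))
    (hint : Tendsto (fun r : ℝ =>
        ⨆ f ∈ V, eLpNorm (Set.indicator {ω | r < ‖(f : Ω → X) ω‖} (f : Ω → X)) p μ)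
      atTop (nhds 0))
    (htight : ∀ ε : ℝ, 0 < ε → ∃ K : Set X, IsCompact K ∧
        ∀ f ∈ V, μ {ω | (f : Ω → X) ω ∉ K} ≤ ENNReal.ofReal ε)
    (hscalar : ∀ L : X →L[ℝ] ℝ, IsCompact (closure ((fun f => L.compLp f) '' V))) :
    IsCompact (closure V) := by
  have hUI := unifIntegrable_of_tendsto_iSup_eLpNorm_indicator hp' hint
  choose K hK hKV using fun j : ℕ => htight (1 / (j + 1)) (by positivity)
  obtain ⟨L, hL⟩ := exists_seq_dual_injOn_of_isSeparable
    (TopologicalSpace.IsSeparable.iUnion fun j => (hK j).isSeparable)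
  refine (totallyBounded_of_forall_exists_cauchySeq_subseq fun u hu => ?_).closure
    |>.isCompact_of_isClosed isClosed_closure
  obtain ⟨a, φ, hφ, ha⟩ := exists_subseq_forall_tendsto (fun n => hscalar (L n))
    (x := fun k n => (L n).compLp (u k)) fun k n => subset_closure ⟨u k, hu k, rfl⟩
  have hUIφ : UnifIntegrable (fun k => (u (φ k) : Ω → X)) p μ :=
    hUI.comp fun k => ⟨u (φ k), hu _⟩
  refine ⟨φ, hφ, Lp.cauchySeq_of_unifIntegrable_of_tendstoInMeasure (f := u ∘ φ) hUIφ ?_⟩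
  refine tendstoInMeasure_sub_of_tight_of_separating (f := fun k => (u (φ k) : Ω → X))
    (L := fun n => L n) (fun n => (L n).continuous) (fun ε hε => ?_) fun n => ?_
  · obtain ⟨j, hj⟩ := exists_nat_one_div_lt hε
    exact ⟨K j, hK j, hL.mono (subset_iUnion K j),
      fun k => (hKV j _ (hu _)).trans (ENNReal.ofReal_le_ofReal hj.le)⟩
  · refine (tendstoInMeasure_of_tendsto_Lp (ha n)).sub_prod.congr_left fun ij => ?_
    filter_upwards [(L n).coeFn_compLp (u (φ ij.1)), (L n).coeFn_compLp (u (φ ij.2))]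
      with x h1 h2
    simp [h1, h2]
end

section
/- Let (Ω,μ) be a finite measure space, X a Banach space, and 1 ≤ p < ∞. If a subset V of L^p(μ;X) is relatively compact in norm, then V is uniformly tight: for every ε > 0 there exists a compact set K ⊆ X such that sup_{f∈V} μ({ω : f(ω) ∉ K}) ≤ ε. -/
/-!
A single strongly measurable function is, up to small measure, within `r` of the finite range
of one of its approximating simple functions (convergence a.e. implies convergence in measure).
By Chebyshev's inequality, `L^p`-closeness implies closeness in measure uniformly, so a finite
`δ`-net of the totally bounded set `V` transfers this to all of `V` with one finite set `C`.
Doing this at radii `1 / (k + 1)` with summable error budgets, the intersection of the closed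
thickenings of the sets `C k` is closed and totally bounded, hence compact in the Banach space `X`.
-/

open MeasureTheory ENNReal Filter Set Metric Topology

theorem isCompact_iInter_cthickening {X : Type*} [PseudoMetricSpace X] [CompleteSpace X]
    {C : ℕ → Set X} (hC : ∀ k, (C k).Finite) {r : ℕ → ℝ} (hr : Tendsto r atTop (𝓝 0)) :
    IsCompact (⋂ k, cthickening (r k) (C k)) := by
  refine TotallyBounded.isCompact_of_isClosed (totallyBounded_iff.2 fun ε hε => ?_)
    (isClosed_iInter fun k => isClosed_cthickening)
  obtain ⟨k, hk⟩ := (hr.eventually (gt_mem_nhds hε)).exists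
  refine ⟨C k, hC k, (iInter_subset _ k).trans ?_⟩
  rw [← thickening_eq_biUnion_ball]
  exact cthickening_subset_thickening' hε hk _

theorem exists_isCompact_forall_measure_notMem_le_of_forall_finite_cthickening
    {Ω X ι : Type*} [MeasurableSpace Ω] [PseudoMetricSpace X] [CompleteSpace X]
    (μ : Measure Ω) (F : ι → Ω → X)
    (hF : ∀ r : ℝ, 0 < r → ∀ η : ℝ≥0∞, η ≠ 0 →
      ∃ C : Set X, C.Finite ∧ ∀ i, μ {ω | F i ω ∉ cthickening r C} ≤ η)
    {ε : ℝ≥0∞} (hε : ε ≠ 0) :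
    ∃ K : Set X, IsCompact K ∧ ∀ i, μ {ω | F i ω ∉ K} ≤ ε := by
  obtain ⟨η, hη, hηε⟩ := ENNReal.exists_pos_sum_of_countable' hε ℕ
  choose C hCfin hC using fun k : ℕ =>
    hF (1 / ((k : ℝ) + 1)) Nat.one_div_pos_of_nat (η k) (hη k).ne'
  refine ⟨_, isCompact_iInter_cthickening hCfin tendsto_one_div_add_atTop_nhds_zero_nat,
    fun i => ?_⟩
  calc μ {ω | F i ω ∉ ⋂ k : ℕ, cthickening (1 / ((k : ℝ) + 1)) (C k)}
      = μ (⋃ k : ℕ, {ω | F i ω ∉ cthickening (1 / ((k : ℝ) + 1)) (C k)}) := by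
        simp only [mem_iInter, not_forall, Set.ofPred_exists]
    _ ≤ ∑' k, η k := (measure_iUnion_le _).trans (ENNReal.tsum_le_tsum fun k => hC k i)
    _ ≤ ε := hηε.le

theorem MeasureTheory.AEStronglyMeasurable.exists_finite_measure_notMem_cthickening_le
    {Ω X : Type*} [MeasurableSpace Ω] [PseudoMetricSpace X] {μ : Measure Ω}
    [IsFiniteMeasure μ] {f : Ω → X} (hf : AEStronglyMeasurable f μ) {r : ℝ} (hr : 0 < r)
    {η : ℝ≥0∞} (hη : η ≠ 0) :
    ∃ C : Set X, C.Finite ∧ μ {ω | f ω ∉ cthickening r C} ≤ η := by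
  set s := hf.stronglyMeasurable_mk.approx
  have hs : TendstoInMeasure μ (fun n => ⇑(s n)) atTop f :=
    tendstoInMeasure_of_tendsto_ae (fun n => (s n).aestronglyMeasurable)
      (hf.ae_eq_mk.mono fun ω hω => hω ▸ hf.stronglyMeasurable_mk.tendsto_approx ω)
  obtain ⟨n, hn⟩ := (ENNReal.tendsto_nhds_zero.1 (hs _ (ofReal_pos.2 hr)) η
    (pos_iff_ne_zero.2 hη)).exists
  refine ⟨range (s n), (s n).finite_range, (measure_mono fun ω hω => ?_).trans hn⟩
  by_contra hlt
  exact hω (mem_cthickening_of_edist_le _ _ _ _ (mem_range_self ω)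
    (edist_comm (s n ω) (f ω) ▸ (not_le.1 hlt).le))

theorem MeasureTheory.Lp.exists_pos_forall_edist_lt_measure_le {Ω E : Type*}
    [MeasurableSpace Ω] [NormedAddCommGroup E] {p : ℝ≥0∞} [Fact (1 ≤ p)] (hp : p ≠ ∞)
    (μ : Measure Ω)
    {r : ℝ≥0∞} (hr0 : r ≠ 0) (hr : r ≠ ∞) {η : ℝ≥0∞} (hη : η ≠ 0) :
    ∃ δ, 0 < δ ∧ ∀ f g : Lp E p μ, edist f g < δ → μ {ω | r ≤ edist (f ω) (g ω)} ≤ η := by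
  have hp0 : p ≠ 0 := (one_pos.trans_le Fact.out).ne'
  have hpr : 0 < p.toReal := toReal_pos hp0 hp
  -- `δ = r η^(1/p)` is where Chebyshev's bound `(δ / r)^p` reaches `η`.
  refine ⟨r * η ^ p.toReal⁻¹, ENNReal.mul_pos hr0
    (ENNReal.rpow_pos_of_nonneg (pos_iff_ne_zero.2 hη) (inv_nonneg.2 hpr.le)).ne',
    fun f g hfg => ?_⟩
  calc μ {ω | r ≤ edist (f ω) (g ω)} = μ {ω | r ≤ ‖(⇑f - ⇑g) ω‖ₑ} := by
        simp only [Pi.sub_apply, edist_eq_enorm_sub]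
    _ ≤ r⁻¹ ^ p.toReal * eLpNorm (⇑f - ⇑g) p μ ^ p.toReal :=
        meas_ge_le_mul_pow_eLpNorm_enorm μ hp0 hp
          ((Lp.aestronglyMeasurable f).sub (Lp.aestronglyMeasurable g)) hr0 (by simp [hr])
    _ ≤ r⁻¹ ^ p.toReal * (r * η ^ p.toReal⁻¹) ^ p.toReal := by
        rw [← Lp.edist_def]; gcongr
    _ = η := by
        rw [← ENNReal.mul_rpow_of_nonneg _ _ hpr.le, ← mul_assoc, ENNReal.inv_mul_cancel hr0 hr,
          one_mul, ← ENNReal.rpow_mul, inv_mul_cancel₀ hpr.ne', ENNReal.rpow_one]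

theorem TotallyBounded.exists_finite_forall_measure_notMem_cthickening_le {Ω X : Type*}
    [MeasurableSpace Ω] [NormedAddCommGroup X] {p : ℝ≥0∞} [Fact (1 ≤ p)] (hp : p ≠ ∞)
    {μ : Measure Ω} [IsFiniteMeasure μ] {V : Set (Lp X p μ)} (hV : TotallyBounded V)
    {r : ℝ} (hr : 0 < r) {η : ℝ≥0∞} (hη : η ≠ 0) :
    ∃ C : Set X, C.Finite ∧ ∀ f ∈ V, μ {ω | (f : Ω → X) ω ∉ cthickening r C} ≤ η := by
  have hr2 : 0 < r / 2 := half_pos hr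
  have hη2 : η / 2 ≠ 0 := (ENNReal.half_pos hη).ne'
  obtain ⟨δ, hδ, hclose⟩ := Lp.exists_pos_forall_edist_lt_measure_le (E := X) hp μ
    (ofReal_pos.2 hr2).ne' ofReal_ne_top hη2
  obtain ⟨t, ht, hVt⟩ := EMetric.totallyBounded_iff.1 hV δ hδ
  choose D hDfin hD using fun y : Lp X p μ =>
    (Lp.aestronglyMeasurable y).exists_finite_measure_notMem_cthickening_le hr2 hη2
  refine ⟨⋃ y ∈ t, D y, ht.biUnion fun y _ => hDfin y, fun f hf => ?_⟩
  obtain ⟨y, hyt, hfy⟩ := mem_iUnion₂.1 (hVt hf)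
  have hsub : {ω | f ω ∉ cthickening r (⋃ y ∈ t, D y)} ⊆
      {ω | ENNReal.ofReal (r / 2) ≤ edist (f ω) (y ω)} ∪
        {ω | y ω ∉ cthickening (r / 2) (D y)} := by
    intro ω hω
    simp only [mem_union, mem_ofPred_eq]
    by_contra! hcon
    have hfD := cthickening_cthickening_subset hr2.le hr2.le (D y)
      (mem_cthickening_of_edist_le _ _ _ _ hcon.2 hcon.1.le)
    rw [add_halves] at hfD
    exact hω (cthickening_subset_of_subset r (subset_biUnion_of_mem (u := D) hyt) hfD)
  calc μ {ω | f ω ∉ cthickening r (⋃ y ∈ t, D y)}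
      ≤ μ {ω | ENNReal.ofReal (r / 2) ≤ edist (f ω) (y ω)}
        + μ {ω | y ω ∉ cthickening (r / 2) (D y)} :=
          (measure_mono hsub).trans (measure_union_le _ _)
    _ ≤ η / 2 + η / 2 := add_le_add (hclose f y hfy) (hD y)
    _ = η := ENNReal.add_halves η

theorem uniformly_tight_of_relatively_compact_general
    {Ω : Type*} [MeasurableSpace Ω] {X : Type*} [NormedAddCommGroup X]
    [CompleteSpace X]
    (μ : Measure Ω) [IsFiniteMeasure μ] (p : ℝ≥0∞) [hp : Fact (1 ≤ p)] (hp' : p ≠ ∞)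
    (V : Set (Lp X p μ)) (hV : IsCompact (closure V)) :
    ∀ ε : ℝ, 0 < ε → ∃ K : Set X, IsCompact K ∧
      ∀ f ∈ V, μ {ω | (f : Ω → X) ω ∉ K} ≤ ENNReal.ofReal ε := by
  intro ε hε
  have hVtb : TotallyBounded V := hV.totallyBounded.subset subset_closure
  obtain ⟨K, hK, hfK⟩ :=
    exists_isCompact_forall_measure_notMem_le_of_forall_finite_cthickening μ
    (fun f : V => ⇑(f : Lp X p μ))
    (fun r hr η hη => (hVtb.exists_finite_forall_measure_notMem_cthickening_le hp' hr hη).imp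
      fun C hC => ⟨hC.1, fun f => hC.2 f f.2⟩)
    (ofReal_pos.2 hε).ne'
  exact ⟨K, hK, fun f hf => hfK ⟨f, hf⟩⟩

/-- If a subset `V` of `L^p(μ;X)` (`(Ω,μ)` a finite measure space, `X` a Banach space,
`1 ≤ p < ∞`) is relatively compact in norm, then `V` is uniformly tight: for every
`ε > 0` there is a compact `K ⊆ X` with `sup_{f∈V} μ({f ∉ K}) ≤ ε`. -/
theorem uniformly_tight_of_relatively_compact
    {Ω : Type*} [MeasurableSpace Ω] {X : Type*} [NormedAddCommGroup X]
    [NormedSpace ℝ X] [CompleteSpace X]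
    (μ : Measure Ω) [IsFiniteMeasure μ] (p : ℝ≥0∞) [hp : Fact (1 ≤ p)] (hp' : p ≠ ∞)
    (V : Set (Lp X p μ)) (hV : IsCompact (closure V)) :
    ∀ ε : ℝ, 0 < ε → ∃ K : Set X, IsCompact K ∧
      ∀ f ∈ V, μ {ω | (f : Ω → X) ω ∉ K} ≤ ENNReal.ofReal ε :=
  uniformly_tight_of_relatively_compact_general μ p (hp := hp) hp' V hV
end

section
/- Let (Ω,μ) be a finite measure space, X a Banach space, 1 ≤ p < ∞, and let K ⊆ X be a fixed compact set. If V ⊆ L^p(μ;X) is scalarly relatively compact and every function in V takes (μ-almost all of) its values in K, then V is relatively compact in L^p(μ;X). -/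
/-!
Hahn–Banach separates the points of `K` by functionals, and compactness of `K` makes the
separation uniform: for every `ε > 0` there are finitely many functionals `L` and a constant `C`
with `‖y - z‖ ≤ ε + C ∑ |L y - L z|` on `K`. Integrating this pointwise bound, the `L^p` distance
of two functions valued in `K` is controlled by the `L^p` distances of finitely many scalar
functions `L ∘ f`. Hence the uniform structure of `V` is induced by the map
`f ↦ (L ∘ f)_{L ∈ X*}`, whose image lies in a product of compact sets (Tychonoff), so `V` is
totally bounded and its closure is compact in the complete space `L^p(μ;X)`.
-/

open MeasureTheory ENNReal Filter Topology Uniformity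

theorem TotallyBounded.of_image {α β : Type*} [UniformSpace α] [UniformSpace β] {f : α → β}
    {s : Set α} (hs : TotallyBounded (f '' s))
    (hf : ∀ U ∈ 𝓤 α, ∃ W ∈ 𝓤 β, ∀ x ∈ s, ∀ y ∈ s, (f x, f y) ∈ W → (x, y) ∈ U) :
    TotallyBounded s := by
  intro U hU
  obtain ⟨W, hW, hWU⟩ := hf U hU
  obtain ⟨t, hts, htfin, hst⟩ :=
    Set.exists_subset_image_finite_and.1 (totallyBounded_iff_subset.1 hs W hW)
  refine ⟨t, htfin, fun x hx => ?_⟩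
  obtain ⟨_, ⟨y, hyt, rfl⟩, hxy⟩ := Set.mem_iUnion₂.1 (hst (Set.mem_image_of_mem f hx))
  exact Set.mem_iUnion₂.2 ⟨y, hyt, hWU x hx y (hts hyt) hxy⟩

section Compact

variable {X : Type*} [NormedAddCommGroup X] [NormedSpace ℝ X] {K : Set X}

theorem IsCompact.exists_finset_le_sum_abs_dual_sub (hK : IsCompact K) {ε : ℝ} (hε : 0 < ε) :
    ∃ F : Finset (X →L[ℝ] ℝ), ∃ δ > 0, ∀ y ∈ K, ∀ z ∈ K, ε ≤ ‖y - z‖ →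
      δ ≤ ∑ L ∈ F, |L y - L z| := by
  set S : Set (X × X) := K ×ˢ K ∩ {q | ε ≤ ‖q.1 - q.2‖}
  have hS : IsCompact S := (hK.prod hK).inter_right (isClosed_le (by fun_prop) (by fun_prop))
  have hcover : S ⊆ ⋃ L : X →L[ℝ] ℝ, {q | L q.1 ≠ L q.2} := by
    rintro ⟨y, z⟩ ⟨-, hyz⟩
    have hne : y ≠ z := by
      rintro rfl
      exact (not_le.2 hε) (by simpa using hyz)
    simpa using SeparatingDual.exists_separating_of_ne (R := ℝ) hne
  obtain ⟨F, hF⟩ := hS.elim_finite_subcover _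
    (fun L => isOpen_ne_fun (by fun_prop) (by fun_prop)) hcover
  have hpos : ∀ q ∈ S, 0 < ∑ L ∈ F, |L q.1 - L q.2| := fun q hq => by
    obtain ⟨L, hL, hLq⟩ := Set.mem_iUnion₂.1 (hF hq)
    exact (abs_pos.2 (sub_ne_zero.2 hLq)).trans_le
      (Finset.single_le_sum (f := fun L : X →L[ℝ] ℝ => |L q.1 - L q.2|)
        (fun _ _ => abs_nonneg _) hL)
  obtain ⟨δ, hδ, hδS⟩ := hS.exists_forall_le' (by fun_prop) hpos
  exact ⟨F, δ, hδ, fun y hy z hz hyz => hδS (y, z) ⟨⟨hy, hz⟩, hyz⟩⟩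

theorem IsCompact.exists_finset_norm_sub_le (hK : IsCompact K) {ε : ℝ} (hε : 0 < ε) :
    ∃ F : Finset (X →L[ℝ] ℝ), ∃ C ≥ 0, ∀ y ∈ K, ∀ z ∈ K,
      ‖y - z‖ ≤ ε + C * ∑ L ∈ F, |L y - L z| := by
  obtain ⟨F, δ, hδ, hF⟩ := hK.exists_finset_le_sum_abs_dual_sub hε
  refine ⟨F, Metric.diam K / δ, div_nonneg Metric.diam_nonneg hδ.le, fun y hy z hz => ?_⟩
  rcases lt_or_ge ‖y - z‖ ε with hlt | hge
  · exact hlt.le.trans (le_add_of_nonneg_right (by positivity))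
  · calc ‖y - z‖ = dist y z := (dist_eq_norm y z).symm
      _ ≤ Metric.diam K := Metric.dist_le_diam_of_mem hK.isBounded hy hz
      _ ≤ Metric.diam K / δ * ∑ L ∈ F, |L y - L z| := by
        rw [div_mul_eq_mul_div, le_div_iff₀ hδ]
        exact mul_le_mul_of_nonneg_left (hF y hy z hz hge) Metric.diam_nonneg
      _ ≤ _ := le_add_of_nonneg_left hε.le

end Compact

section Lp

variable {Ω : Type*} [MeasurableSpace Ω] {μ : Measure Ω} {p : ℝ≥0∞} [Fact (1 ≤ p)]
  [IsFiniteMeasure μ]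

theorem MeasureTheory.Lp.norm_le_of_ae_norm_le_add_sum {E ι : Type*} [NormedAddCommGroup E]
    (f : Lp E p μ) (g : ι → Lp ℝ p μ) (s : Finset ι) {a C : ℝ} (ha : 0 ≤ a) (hC : 0 ≤ C)
    (h : ∀ᵐ ω ∂μ, ‖f ω‖ ≤ a + C * ∑ i ∈ s, |g i ω|) :
    ‖f‖ ≤ a * μ.real Set.univ ^ (1 / p.toReal) + C * ∑ i ∈ s, ‖g i‖ := by
  have hp : 1 ≤ p := Fact.out
  have habs : ∀ i, AEStronglyMeasurable (fun ω => |g i ω|) μ := fun i =>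
    (Lp.aestronglyMeasurable (g i)).norm
  have key : eLpNorm f p μ ≤ ENNReal.ofReal (‖Lp.const p μ a‖ + C * ∑ i ∈ s, ‖g i‖) :=
    calc eLpNorm f p μ
        ≤ eLpNorm ((fun _ => a) + C • ∑ i ∈ s, fun ω => |g i ω|) p μ :=
          eLpNorm_mono_ae_real (by filter_upwards [h] with ω hω using by simpa using hω)
      _ ≤ eLpNorm (fun _ => a) p μ + ‖C‖ₑ * ∑ i ∈ s, eLpNorm (fun ω => |g i ω|) p μ := by
          refine (eLpNorm_add_le aestronglyMeasurable_const ?_ hp).trans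
            (add_le_add le_rfl (eLpNorm_const_smul_le.trans ?_))
          · exact (Finset.aestronglyMeasurable_sum _ fun i _ => habs i).const_smul C
          · gcongr
            exact eLpNorm_sum_le (fun i _ => habs i) hp
      _ = ENNReal.ofReal (‖Lp.const p μ a‖ + C * ∑ i ∈ s, ‖g i‖) := by
          have hconst : eLpNorm (fun _ => a) p μ = ‖Lp.const p μ a‖ₑ := by
            rw [Lp.enorm_def]; exact eLpNorm_congr_ae (Lp.coeFn_const p μ a).symm
          have habs_eq : ∀ i, eLpNorm (fun ω => |g i ω|) p μ = ‖g i‖ₑ := fun i => by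
            simpa only [Real.norm_eq_abs, Lp.enorm_def] using eLpNorm_norm (g i)
          simp only [hconst, habs_eq, ENNReal.ofReal_add (norm_nonneg _)
            (mul_nonneg hC (Finset.sum_nonneg fun _ _ => norm_nonneg _)), ENNReal.ofReal_mul hC,
            ENNReal.ofReal_sum_of_nonneg fun _ _ => norm_nonneg _, ofReal_norm,
            Real.enorm_of_nonneg hC]
  calc ‖f‖ ≤ ‖Lp.const p μ a‖ + C * ∑ i ∈ s, ‖g i‖ :=
        ENNReal.toReal_le_of_le_ofReal (by positivity) key
    _ ≤ _ := by
        gcongr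
        simpa [Real.norm_of_nonneg ha] using Lp.norm_const_le (p := p) (μ := μ) (c := a)

theorem MeasureTheory.Lp.exists_forall_dist_compLp_lt_imp_dist_lt {X : Type*}
    [NormedAddCommGroup X] [NormedSpace ℝ X] {K : Set X} (hK : IsCompact K) {ε : ℝ} (hε : 0 < ε) :
    ∃ F : Finset (X →L[ℝ] ℝ), ∃ η > 0, ∀ f g : Lp X p μ, (∀ᵐ ω ∂μ, f ω ∈ K) →
      (∀ᵐ ω ∂μ, g ω ∈ K) → (∀ L ∈ F, dist (L.compLp f) (L.compLp g) < η) → dist f g < ε := by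
  obtain ⟨ε', hε', hε'M⟩ := exists_pos_mul_lt (half_pos hε) (μ.real Set.univ ^ (1 / p.toReal))
  obtain ⟨F, C, hC, hF⟩ := hK.exists_finset_norm_sub_le hε'
  obtain ⟨η, hη, hηC⟩ := exists_pos_mul_lt (half_pos hε) (C * F.card)
  refine ⟨F, η, hη, fun f g hfK hgK hfg => ?_⟩
  have hcomp : ∀ L ∈ F, ∀ᵐ ω ∂μ, (L.compLp f - L.compLp g) ω = L (f ω) - L (g ω) :=
    fun L _ => by
      filter_upwards [Lp.coeFn_sub (L.compLp f) (L.compLp g), L.coeFn_compLp f,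
        L.coeFn_compLp g] with ω hsub hf hg
      rw [hsub, Pi.sub_apply, hf, hg]
  have hbound : ∀ᵐ ω ∂μ, ‖(f - g) ω‖ ≤ ε' + C * ∑ L ∈ F, |(L.compLp f - L.compLp g) ω| := by
    filter_upwards [hfK, hgK, Lp.coeFn_sub f g, (eventually_all_finset F).2 hcomp]
      with ω hfω hgω hsub hcompω
    rw [hsub, Pi.sub_apply, Finset.sum_congr rfl fun L hL => by rw [hcompω L hL]]
    exact hF _ hfω _ hgω
  have hsum : ∑ L ∈ F, ‖L.compLp f - L.compLp g‖ ≤ F.card * η := by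
    simpa only [_root_.dist_eq_norm, nsmul_eq_mul] using
      Finset.sum_le_card_nsmul F _ η fun L hL => (hfg L hL).le
  calc dist f g = ‖f - g‖ := _root_.dist_eq_norm f g
    _ ≤ ε' * μ.real Set.univ ^ (1 / p.toReal) + C * ∑ L ∈ F, ‖L.compLp f - L.compLp g‖ :=
      Lp.norm_le_of_ae_norm_le_add_sum _ _ F hε'.le hC hbound
    _ ≤ ε' * μ.real Set.univ ^ (1 / p.toReal) + C * F.card * η := by
      rw [mul_assoc]; gcongr
    _ < ε := by linarith

end Lp

theorem relatively_compact_of_scalarlyCompact_of_valued_in_compact_general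
    {Ω : Type*} [MeasurableSpace Ω] {X : Type*} [NormedAddCommGroup X]
    [NormedSpace ℝ X] [CompleteSpace X]
    (μ : Measure Ω) [IsFiniteMeasure μ] (p : ℝ≥0∞) [hp : Fact (1 ≤ p)]
    (K : Set X) (hK : IsCompact K) (V : Set (Lp X p μ))
    (hKV : ∀ f ∈ V, ∀ᵐ ω ∂μ, (f : Ω → X) ω ∈ K)
    (hscalar : ∀ L : X →L[ℝ] ℝ, IsCompact (closure ((fun f => L.compLp f) '' V))) :
    IsCompact (closure V) := by
  have hV : TotallyBounded V := by
    refine TotallyBounded.of_image (f := fun f (L : X →L[ℝ] ℝ) => L.compLp f) ?_ ?_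
    · refine (isCompact_univ_pi hscalar).totallyBounded.subset ?_
      rintro _ ⟨f, hf, rfl⟩ L -
      exact subset_closure ⟨f, hf, rfl⟩
    · intro U hU
      obtain ⟨ε, hε, hεU⟩ := Metric.mem_uniformity_dist.1 hU
      obtain ⟨F, η, hη, hF⟩ :=
        Lp.exists_forall_dist_compLp_lt_imp_dist_lt (μ := μ) (p := p) hK hε
      have hW : ⋂ L ∈ F, {q : ((X →L[ℝ] ℝ) → Lp ℝ p μ) × ((X →L[ℝ] ℝ) → Lp ℝ p μ) |
          dist (q.1 L) (q.2 L) < η} ∈ 𝓤 _ :=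
        (biInter_finset_mem F).2 fun L _ =>
          Pi.uniformContinuous_proj (fun _ => Lp ℝ p μ) L (Metric.dist_mem_uniformity hη)
      refine ⟨_, hW, fun f hf g hg hfg => hεU (hF f g (hKV f hf) (hKV g hg) ?_)⟩
      simpa using hfg
  exact hV.closure.isCompact_of_isClosed isClosed_closure

/-- If `V ⊆ L^p(μ;X)` is scalarly relatively compact and every function in `V` takes
μ-almost all of its values in a fixed compact set `K ⊆ X`, then `V` is relatively
compact in `L^p(μ;X)`. -/
theorem relatively_compact_of_scalarlyCompact_of_valued_in_compact
    {Ω : Type*} [MeasurableSpace Ω] {X : Type*} [NormedAddCommGroup X]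
    [NormedSpace ℝ X] [CompleteSpace X]
    (μ : Measure Ω) [IsFiniteMeasure μ] (p : ℝ≥0∞) [hp : Fact (1 ≤ p)] (hp' : p ≠ ∞)
    (K : Set X) (hK : IsCompact K) (V : Set (Lp X p μ))
    (hKV : ∀ f ∈ V, ∀ᵐ ω ∂μ, (f : Ω → X) ω ∈ K)
    (hscalar : ∀ L : X →L[ℝ] ℝ, IsCompact (closure ((fun f => L.compLp f) '' V))) :
    IsCompact (closure V) :=
  relatively_compact_of_scalarlyCompact_of_valued_in_compact_general μ p (hp := hp) K hK V hKV
    hscalar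
end

section
/- Let (Ω,μ) be a finite measure space, X a Banach space, and let V be a set of strongly μ-measurable functions from Ω to X. If V fails to be uniformly tight, then there exist ε₀ > 0 and δ₀ > 0 such that for every compact set K ⊆ X there is a function f ∈ V with μ({ω : f(ω) ∉ K + B_{δ₀}}) > ε₀, where B_{δ₀} is the open ball in X of radius δ₀ centred at 0 and K + B_{δ₀} = {x + y : x ∈ K, y ∈ B_{δ₀}}. -/
open MeasureTheory ENNReal Pointwise

/-- If a set `V` of strongly μ-measurable functions from a finite measure space `(Ω,μ)`
to a Banach space `X` fails to be uniformly tight, then there exist `ε₀ > 0` and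
`δ₀ > 0` such that for every compact `K ⊆ X` there is `f ∈ V` with
`μ({f ∉ K + B_{δ₀}}) > ε₀`. -/
theorem exists_eps_delta_of_not_uniformly_tight
    {Ω : Type*} [MeasurableSpace Ω] {X : Type*} [NormedAddCommGroup X]
    [NormedSpace ℝ X] [CompleteSpace X]
    (μ : Measure Ω) [IsFiniteMeasure μ]
    (V : Set (Ω → X)) (hmeas : ∀ f ∈ V, AEStronglyMeasurable f μ)
    (hnot : ¬ ∀ ε : ℝ, 0 < ε → ∃ K : Set X, IsCompact K ∧
        ∀ f ∈ V, μ {ω | f ω ∉ K} ≤ ENNReal.ofReal ε) :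
    ∃ ε₀ > (0 : ℝ), ∃ δ₀ > (0 : ℝ), ∀ K : Set X, IsCompact K →
      ∃ f ∈ V, ENNReal.ofReal ε₀ < μ {ω | f ω ∉ K + Metric.ball (0 : X) δ₀} := by
  by_contra hcon
  push_neg at hcon
  apply hnot
  intro ε hε
  have hδ : ∀ n : ℕ, (0:ℝ) < (1/2)^(n+1) := fun n => by positivity
  have hε' : ∀ n : ℕ, (0:ℝ) < ε * (1/2)^(n+1) := fun n => by positivity
  choose K hKc hK using fun n : ℕ =>
    hcon (ε * (1/2)^(n+1)) (hε' n) ((1/2)^(n+1)) (hδ n)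
  set S : Set X := ⋂ n, closure (K n + Metric.ball (0:X) ((1/2)^(n+1))) with hS
  have hSc : IsCompact S := by
    apply TotallyBounded.isCompact_of_isClosed
    · rw [Metric.totallyBounded_iff]
      intro r hr
      obtain ⟨n, hn⟩ : ∃ n : ℕ, (1/2:ℝ)^(n+1) < r/3 := by
        obtain ⟨n, hn⟩ := exists_pow_lt_of_lt_one (by positivity : (0:ℝ) < r/3)
          (by norm_num : (1/2:ℝ) < 1)
        refine ⟨n, lt_of_le_of_lt ?_ hn⟩
        rw [pow_succ]
        nlinarith [pow_pos (by norm_num : (0:ℝ) < 1/2) n]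
      obtain ⟨t, htf, ht⟩ := (Metric.totallyBounded_iff.1 (hKc n).totallyBounded)
        (r/3) (by positivity)
      refine ⟨t, htf, ?_⟩
      intro y hy
      have hy' : y ∈ closure (K n + Metric.ball (0:X) ((1/2)^(n+1))) :=
        Set.mem_iInter.1 hy n
      obtain ⟨z, hz, hdz⟩ := Metric.mem_closure_iff.1 hy' (r/3) (by positivity)
      obtain ⟨k, hk, b, hb, rfl⟩ := hz
      obtain ⟨x, hx, hkx⟩ := Set.mem_iUnion₂.1 (ht hk)
      refine Set.mem_iUnion₂.2 ⟨x, hx, ?_⟩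
      have hbn : ‖b‖ < (1/2)^(n+1) := by simpa using Metric.mem_ball.1 hb
      have h1 : dist y x ≤ dist y (k + b) + dist (k + b) k + dist k x :=
        dist_triangle4 y (k+b) k x
      have h2 : dist (k + b) k = ‖b‖ := by
        simp [dist_eq_norm]
      rw [Metric.mem_ball]
      calc dist y x ≤ dist y (k + b) + dist (k + b) k + dist k x := h1
        _ < r/3 + r/3 + r/3 := by
            have := Metric.mem_ball.1 hkx
            rw [h2]
            have : dist k x < r/3 := Metric.mem_ball.1 hkx
            linarith [hbn, hn]
        _ = r := by ring
    · exact isClosed_iInter fun n => isClosed_closure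
  refine ⟨S, hSc, fun f hf => ?_⟩
  have hsub : {ω | f ω ∉ S} ⊆
      ⋃ n, {ω | f ω ∉ K n + Metric.ball (0:X) ((1/2)^(n+1))} := by
    intro ω hω
    simp only [hS, Set.mem_setOf_eq, Set.mem_iInter, not_forall] at hω
    obtain ⟨n, hn⟩ := hω
    exact Set.mem_iUnion.2 ⟨n, fun h => hn (subset_closure h)⟩
  have hsum : ∑' n : ℕ, ENNReal.ofReal (ε * (1/2)^(n+1)) = ENNReal.ofReal ε := by
    have h1 : ∀ n : ℕ, ENNReal.ofReal (ε * (1/2)^(n+1))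
        = ENNReal.ofReal ε * (2:ℝ≥0∞)⁻¹^(n+1) := by
      intro n
      rw [ENNReal.ofReal_mul hε.le, ENNReal.ofReal_pow (by norm_num)]
      congr 2
      rw [one_div, ENNReal.ofReal_inv_of_pos (by norm_num)]
      norm_num
    simp_rw [h1]
    rw [ENNReal.tsum_mul_left]
    have h2 : ∑' n : ℕ, (2:ℝ≥0∞)⁻¹^(n+1) = 1 := by
      simp_rw [pow_succ']
      rw [ENNReal.tsum_mul_left, ENNReal.tsum_geometric]
      rw [← ENNReal.one_sub_inv_two]
      simp [ENNReal.inv_two_add_inv_two]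
      rw [ENNReal.inv_mul_cancel] <;> norm_num
    rw [h2, mul_one]
  calc μ {ω | f ω ∉ S}
      ≤ ∑' n, μ {ω | f ω ∉ K n + Metric.ball (0:X) ((1/2)^(n+1))} :=
        (measure_mono hsub).trans (measure_iUnion_le _)
    _ ≤ ∑' n : ℕ, ENNReal.ofReal (ε * (1/2)^(n+1)) :=
        ENNReal.tsum_le_tsum (fun n => hK n f hf)
    _ = ENNReal.ofReal ε := hsum
end

section
/- Let (Ω,μ) be a finite measure space, X a Banach space, and 1 ≤ p < ∞. If a subset V of L^p(μ;X) is totally bounded, then V is uniformly tight. Equivalently (contrapositive): if V fails to be uniformly tight, then V contains a sequence (f_n)_{n≥1} with no Cauchy subsequence in L^p(μ;X). -/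
open MeasureTheory ENNReal

open Filter Topology Metric Set

/-!
Lp-simple functions are dense in `L^p` (`p < ∞`) and have finite range, so Chebyshev's inequality
turns a finite net of a totally bounded `V` into a finite `G ⊆ X` whose closed `δ`-thickening
contains the values of every `f ∈ V` off a set of measure at most `β`. Intersecting the
`1/(k+1)`-thickenings of such sets `G k` with `∑ β k < ε` gives a closed, totally bounded,
hence compact, set `K`.
-/

section

variable {Ω E : Type*} [MeasurableSpace Ω] [NormedAddCommGroup E] {μ : Measure Ω}
  {p : ℝ≥0∞} [Fact (1 ≤ p)]

theorem Lp.meas_dist_ge_le_mul_pow_edist (hp : p ≠ ∞) (f g : Lp E p μ) {δ : ℝ} (hδ : 0 < δ) :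
    μ {ω | δ ≤ dist (f ω) (g ω)} ≤ (ENNReal.ofReal δ)⁻¹ ^ p.toReal * edist f g ^ p.toReal := by
  have hp₀ : p ≠ 0 := (zero_lt_one.trans_le Fact.out).ne'
  rw [Lp.edist_def]
  convert meas_ge_le_mul_pow_eLpNorm_enorm μ hp₀ hp
    ((Lp.aestronglyMeasurable f).sub (Lp.aestronglyMeasurable g))
    (ENNReal.ofReal_pos.2 hδ).ne' (by simp) using 2
  ext ω
  rw [mem_ofPred_eq, mem_ofPred_eq, Pi.sub_apply, ← ofReal_norm,
    ENNReal.ofReal_le_ofReal_iff (norm_nonneg _), dist_eq_norm]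

theorem Lp.exists_forall_edist_lt_meas_dist_ge_le (hp : p ≠ ∞) {δ : ℝ} (hδ : 0 < δ)
    {β : ℝ≥0∞} (hβ : 0 < β) :
    ∃ η > 0, ∀ f g : Lp E p μ, edist f g < η → μ {ω | δ ≤ dist (f ω) (g ω)} ≤ β := by
  have hp₀ : 0 < p.toReal := ENNReal.toReal_pos (zero_lt_one.trans_le Fact.out).ne' hp
  have hlim : Tendsto (fun t : ℝ≥0∞ ↦ (ENNReal.ofReal δ)⁻¹ ^ p.toReal * t ^ p.toReal)
      (𝓝 0) (𝓝 0) := by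
    have hC : (ENNReal.ofReal δ)⁻¹ ^ p.toReal ≠ ∞ := by simp [hδ]
    have := ENNReal.Tendsto.const_mul
      ((ENNReal.continuous_rpow_const (y := p.toReal)).tendsto 0) (Or.inr hC)
    simpa [ENNReal.zero_rpow_of_pos hp₀] using this
  obtain ⟨η, hη, hηβ⟩ :=
    ENNReal.nhds_zero_basis.eventually_iff.1 (hlim.eventually (gt_mem_nhds hβ))
  exact ⟨η, hη, fun f g hfg ↦
    (Lp.meas_dist_ge_le_mul_pow_edist hp f g hδ).trans (hηβ hfg).le⟩

theorem TotallyBounded.exists_finite_forall_meas_notMem_cthickening_le (hp : p ≠ ∞)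
    {V : Set (Lp E p μ)} (hV : TotallyBounded V) {δ : ℝ} (hδ : 0 < δ) {β : ℝ≥0∞} (hβ : 0 < β) :
    ∃ G : Set E, G.Finite ∧ ∀ f ∈ V, μ {ω | f ω ∉ cthickening δ G} ≤ β := by
  obtain ⟨η, hη, hηβ⟩ := Lp.exists_forall_edist_lt_meas_dist_ge_le (E := E) (μ := μ) hp hδ hβ
  obtain ⟨t, ht, hVt⟩ := EMetric.totallyBounded_iff.1 hV (η / 2) (ENNReal.half_pos hη.ne')
  have hdense (y : Lp E p μ) : ∃ s : Lp.simpleFunc E p μ, edist y s < η / 2 := by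
    obtain ⟨_, ⟨s, rfl⟩, hs⟩ := EMetric.mem_closure_iff.1
      ((Lp.simpleFunc.denseRange (E := E) (μ := μ) hp).closure_range ▸ mem_univ y) _
      (ENNReal.half_pos hη.ne')
    exact ⟨s, hs⟩
  choose s hs using hdense
  refine ⟨⋃ y ∈ t, range (Lp.simpleFunc.toSimpleFunc (s y)), ht.biUnion fun y _ ↦
    SimpleFunc.finite_range _, fun f hf ↦ ?_⟩
  obtain ⟨y, hy, hfy⟩ := mem_iUnion₂.1 (hVt hf)
  have hfs : edist f (s y) < η := calc
    edist f (s y) ≤ edist f y + edist y (s y) := edist_triangle _ _ _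
    _ < η / 2 + η / 2 := ENNReal.add_lt_add (mem_eball.1 hfy) (hs y)
    _ = η := ENNReal.add_halves η
  refine (measure_mono_ae ?_).trans (hηβ f _ hfs)
  filter_upwards [Lp.simpleFunc.toSimpleFunc_eq_toFun (s y)]
    with ω hω (hfω : f ω ∉ cthickening δ _)
  have hmem : Lp.simpleFunc.toSimpleFunc (s y) ω ∈
      ⋃ y ∈ t, range (Lp.simpleFunc.toSimpleFunc (s y)) := mem_biUnion hy (mem_range_self ω)
  show δ ≤ dist (f ω) ((s y : Lp E p μ) ω)
  by_contra! hlt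
  exact hfω (mem_cthickening_of_dist_le _ _ _ _ hmem (by rw [hω]; exact hlt.le))

end

theorem exists_isCompact_forall_meas_notMem_le_of_forall_finite_cthickening
    {ι Ω X : Type*} [MeasurableSpace Ω] [PseudoMetricSpace X] [CompleteSpace X]
    (μ : Measure Ω) (f : ι → Ω → X)
    (h : ∀ δ > (0 : ℝ), ∀ β > (0 : ℝ≥0∞), ∃ G : Set X, G.Finite ∧
      ∀ i, μ {ω | f i ω ∉ cthickening δ G} ≤ β)
    {ε : ℝ≥0∞} (hε : ε ≠ 0) :
    ∃ K : Set X, IsCompact K ∧ ∀ i, μ {ω | f i ω ∉ K} ≤ ε := by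
  obtain ⟨β, hβ, hβε⟩ := ENNReal.exists_pos_sum_of_countable' hε ℕ
  choose G hG hGβ using fun k : ℕ ↦ h (1 / (k + 1)) Nat.one_div_pos_of_nat (β k) (hβ k)
  refine ⟨⋂ k : ℕ, cthickening (1 / (k + 1)) (G k), ?_, fun i ↦ ?_⟩
  · refine TotallyBounded.isCompact_of_isClosed ?_ (isClosed_iInter fun k ↦ isClosed_cthickening)
    refine Metric.totallyBounded_iff.2 fun r hr ↦ ?_
    obtain ⟨k, hk⟩ := exists_nat_one_div_lt hr
    refine ⟨G k, hG k, (iInter_subset _ k).trans ?_⟩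
    rw [← thickening_eq_biUnion_ball]
    exact cthickening_subset_thickening' hr hk _
  · calc μ {ω | f i ω ∉ ⋂ k : ℕ, cthickening (1 / (k + 1)) (G k)}
        = μ (⋃ k : ℕ, {ω | f i ω ∉ cthickening (1 / (k + 1)) (G k)}) := by
          congr 1; ext ω; simp
      _ ≤ ∑' k, β k := (measure_iUnion_le _).trans (ENNReal.tsum_le_tsum fun k ↦ hGβ k i)
      _ ≤ ε := hβε.le

theorem uniformly_tight_of_totallyBounded_general
    {Ω : Type*} [MeasurableSpace Ω] {X : Type*} [NormedAddCommGroup X]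
    [CompleteSpace X]
    (μ : Measure Ω) (p : ℝ≥0∞) [hp : Fact (1 ≤ p)] (hp' : p ≠ ∞)
    (V : Set (Lp X p μ)) (hV : TotallyBounded V) :
    ∀ ε : ℝ, 0 < ε → ∃ K : Set X, IsCompact K ∧
      ∀ f ∈ V, μ {ω | (f : Ω → X) ω ∉ K} ≤ ENNReal.ofReal ε := by
  intro ε hε
  obtain ⟨K, hK, hKε⟩ := exists_isCompact_forall_meas_notMem_le_of_forall_finite_cthickening μ
    (fun f : V ↦ ((f : Lp X p μ) : Ω → X))
    (fun δ hδ β hβ ↦ by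
      obtain ⟨G, hG, hGβ⟩ := hV.exists_finite_forall_meas_notMem_cthickening_le hp' hδ hβ
      exact ⟨G, hG, fun f ↦ hGβ f f.2⟩)
    (ENNReal.ofReal_pos.2 hε).ne'
  exact ⟨K, hK, fun f hf ↦ hKε ⟨f, hf⟩⟩

/-- If a subset `V` of `L^p(μ;X)` (`(Ω,μ)` a finite measure space, `X` a Banach space,
`1 ≤ p < ∞`) is totally bounded, then `V` is uniformly tight: for every `ε > 0` there
is a compact `K ⊆ X` with `μ({f ∉ K}) ≤ ε` for all `f ∈ V`. -/
theorem uniformly_tight_of_totallyBounded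
    {Ω : Type*} [MeasurableSpace Ω] {X : Type*} [NormedAddCommGroup X]
    [NormedSpace ℝ X] [CompleteSpace X]
    (μ : Measure Ω) [IsFiniteMeasure μ] (p : ℝ≥0∞) [hp : Fact (1 ≤ p)] (hp' : p ≠ ∞)
    (V : Set (Lp X p μ)) (hV : TotallyBounded V) :
    ∀ ε : ℝ, 0 < ε → ∃ K : Set X, IsCompact K ∧
      ∀ f ∈ V, μ {ω | (f : Ω → X) ω ∉ K} ≤ ENNReal.ofReal ε :=
  uniformly_tight_of_totallyBounded_general μ p (hp := hp) hp' V hV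
end
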